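/- Let $G$ be a topological group in which every 3-generated subgroup is discrete. Then $G$ is 2-swelling: for all compact $A, B \subseteq G$ and elements $a, b, c \in G$, the inclusions $aA \cup bB \subseteq A \cup B$ and $aA \cap bB \subseteq c(A \cap B)$ imply the equalities $aA \cup bB = A \cup B$ and $aA \cap bB = c(A \cap B)$. -/

import Mathlib

/-!
Let `H` be the subgroup generated by `a, b, c`. It is discrete, hence closed (the hypothesis
applied to single elements makes `G` Hausdorff), so every right coset `H x` meets the compact
sets `A` and `B` in finite sets. Left multiplication by `a`, `b`, `c` maps each coset `H x` to
itself, so the hypotheses restrict to the finite sets `A ∩ H x`, `B ∩ H x`. For finite sets,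
counting gives `|aA ∪ bB| + |aA ∩ bB| = |A| + |B| = |A ∪ B| + |c(A ∩ B)|`, so neither
inclusion can be strict.
-/

open Pointwise Set

section Swelling

variable {Γ α : Type*} [Group Γ] [MulAction Γ α] {A B : Set α} {a b c : Γ}

theorem swell_of_finite (hA : A.Finite) (hB : B.Finite)
    (h1 : a • A ∪ b • B ⊆ A ∪ B) (h2 : a • A ∩ b • B ⊆ c • (A ∩ B)) :
    a • A ∪ b • B = A ∪ B ∧ a • A ∩ b • B = c • (A ∩ B) := by
  have hAB : (c • (A ∩ B)).Finite := (hA.inter_of_left B).smul_set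
  have hcard : (a • A ∪ b • B).ncard + (a • A ∩ b • B).ncard
      = (A ∪ B).ncard + (c • (A ∩ B)).ncard := by
    rw [ncard_union_add_ncard_inter _ _ hA.smul_set hB.smul_set, ncard_smul_set, ncard_smul_set,
      ncard_smul_set, ncard_union_add_ncard_inter _ _ hA hB]
  have hle1 := ncard_le_ncard h1 (hA.union hB)
  have hle2 := ncard_le_ncard h2 hAB
  exact ⟨eq_of_subset_of_ncard_le h1 (by omega) (hA.union hB),
    eq_of_subset_of_ncard_le h2 (by omega) hAB⟩

theorem smul_set_inter_of_smul_eq {g : Γ} {O : Set α} (hO : g • O = O) (S : Set α) :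
    g • (S ∩ O) = g • S ∩ O := by
  rw [smul_set_inter, hO]

theorem swell_inter_of_invariant {O : Set α} (ha : a • O = O) (hb : b • O = O) (hc : c • O = O)
    (hAO : (A ∩ O).Finite) (hBO : (B ∩ O).Finite)
    (h1 : a • A ∪ b • B ⊆ A ∪ B) (h2 : a • A ∩ b • B ⊆ c • (A ∩ B)) :
    (a • A ∪ b • B) ∩ O = (A ∪ B) ∩ O ∧ (a • A ∩ b • B) ∩ O = c • (A ∩ B) ∩ O := by
  have hunion : a • (A ∩ O) ∪ b • (B ∩ O) = (a • A ∪ b • B) ∩ O := by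
    rw [smul_set_inter_of_smul_eq ha, smul_set_inter_of_smul_eq hb, union_inter_distrib_right]
  have hinter : a • (A ∩ O) ∩ b • (B ∩ O) = (a • A ∩ b • B) ∩ O := by
    rw [smul_set_inter_of_smul_eq ha, smul_set_inter_of_smul_eq hb, ← inter_inter_distrib_right]
  have hrestrict : c • ((A ∩ O) ∩ (B ∩ O)) = c • (A ∩ B) ∩ O := by
    rw [← inter_inter_distrib_right, smul_set_inter_of_smul_eq hc]
  rw [← hunion, ← hinter, ← hrestrict, union_inter_distrib_right]
  refine swell_of_finite hAO hBO ?_ ?_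
  · rw [hunion, ← union_inter_distrib_right]
    exact inter_subset_inter_left O h1
  · rw [hinter, hrestrict]
    exact inter_subset_inter_left O h2

theorem swell_of_invariant_cover
    (hcover : ∀ x, ∃ O : Set α, x ∈ O ∧ a • O = O ∧ b • O = O ∧ c • O = O ∧
      (A ∩ O).Finite ∧ (B ∩ O).Finite)
    (h1 : a • A ∪ b • B ⊆ A ∪ B) (h2 : a • A ∩ b • B ⊆ c • (A ∩ B)) :
    a • A ∪ b • B = A ∪ B ∧ a • A ∩ b • B = c • (A ∩ B) := by
  constructor <;> ext x <;> obtain ⟨O, hx, ha, hb, hc, hAO, hBO⟩ := hcover x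
  · simpa [hx] using congrArg (x ∈ ·) (swell_inter_of_invariant ha hb hc hAO hBO h1 h2).1
  · simpa [hx] using congrArg (x ∈ ·) (swell_inter_of_invariant ha hb hc hAO hBO h1 h2).2

end Swelling

section DiscreteSubgroup

variable {G : Type*} [Group G] [TopologicalSpace G]

theorem Subgroup.eq_one_of_specializes_one {H : Subgroup G} [DiscreteTopology H] {g : G}
    (hg : g ∈ H) (h : g ⤳ 1) : g = 1 :=
  congrArg Subtype.val
    ((Topology.IsInducing.subtypeVal.specializes_iff (x := (⟨g, hg⟩ : H)) (y := 1)).1 h).eq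

variable [IsTopologicalGroup G]

theorem IsTopologicalGroup.t2Space_of_forall_mem_discrete
    (h : ∀ g : G, ∃ H : Subgroup G, g ∈ H ∧ DiscreteTopology H) : T2Space G := by
  refine IsTopologicalGroup.t2Space_of_one_sep fun g hg => ?_
  by_contra! hU
  obtain ⟨H, hgH, hH⟩ := h g
  exact hg (H.eq_one_of_specializes_one hgH (specializes_iff_pure.2 hU))

theorem Subgroup.finite_inter_orbit_of_isCompact [T2Space G] (H : Subgroup G)
    [DiscreteTopology H] {K : Set G} (hK : IsCompact K) (x : G) :
    (K ∩ MulAction.orbit H x).Finite := by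
  have hcompact : IsCompact ((· * x⁻¹) '' K ∩ H) :=
    (hK.image (continuous_mul_const x⁻¹)).inter_right H.isClosed_of_discrete
  have hdiscrete : IsDiscrete ((· * x⁻¹) '' K ∩ H) :=
    (SetLike.isDiscrete_iff_discreteTopology.2 ‹_›).mono inter_subset_right
  refine ((hcompact.finite hdiscrete).image (· * x)).subset ?_
  rintro _ ⟨hy, ⟨h, rfl⟩⟩
  exact ⟨h * x * x⁻¹, ⟨⟨_, hy, rfl⟩, by simp⟩, by simp [Subgroup.smul_def]⟩

end DiscreteSubgroup

theorem stmt_7 {G : Type*} [Group G] [TopologicalSpace G] [IsTopologicalGroup G]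
    (hd : ∀ a b c : G, DiscreteTopology (Subgroup.closure {a, b, c}))
    (A B : Set G) (hA : IsCompact A) (hB : IsCompact B) (a b c : G)
    (h1 : a • A ∪ b • B ⊆ A ∪ B) (h2 : a • A ∩ b • B ⊆ c • (A ∩ B)) :
    a • A ∪ b • B = A ∪ B ∧ a • A ∩ b • B = c • (A ∩ B) := by
  have : T2Space G := IsTopologicalGroup.t2Space_of_forall_mem_discrete fun g =>
    ⟨_, Subgroup.subset_closure (mem_insert g {g, g}), hd g g g⟩
  set H := Subgroup.closure {a, b, c}
  have := hd a b c
  have invariant {g : G} (hg : g ∈ ({a, b, c} : Set G)) (x : G) :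
      g • MulAction.orbit H x = MulAction.orbit H x :=
    MulAction.smul_orbit (⟨g, Subgroup.subset_closure hg⟩ : H) x
  refine swell_of_invariant_cover (fun x => ⟨MulAction.orbit H x, MulAction.mem_orbit_self x,
    invariant (by simp) x, invariant (by simp) x, invariant (by simp) x,
    H.finite_inter_orbit_of_isCompact hA x, H.finite_inter_orbit_of_isCompact hB x⟩) h1 h2
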